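/- Let X be a finite nonempty alphabet, let p be a probability distribution on X, and let x, y ∈ X with p(x) < p(y). Let ε > 0 satisfy p(x) + ε < p(y) − ε, and define q by q(x) = p(x) + ε, q(y) = p(y) − ε, and q(z) = p(z) for all other z. Then q is a probability distribution on X and H*(q) > H*(p). -/

import Mathlib

/-- Lin entropy of a distribution on a finite alphabet. -/
noncomputable def linEntropy {X : Type*} [Fintype X] (p : X → ℝ) : ℝ :=
  ∑ x, p x * ((1 / 2) * Real.logb 2 (4 * p x ^ p x / (p x + 1) ^ (p x + 1)))

/-!
The summand `t ↦ t · ½ log₂ (4 tᵗ / (t+1)^(t+1))` of `linEntropy` is strictly concave on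
`[0, ∞)`: up to the positive factor `1 / (2 log 2)` and a linear term it is
`t² log t - t (t+1) log (t+1)`, whose second derivative is `2 log (t/(t+1)) + 1/(t+1) < 0`.
Moving mass `ε` from `y` to `x` replaces `p x, p y` by the two points `p x + ε, p y - ε`
strictly between them with the same sum, which strictly increases the sum of a strictly
concave function.
-/

open Real Set

theorem StrictConcaveOn.add_lt_add_of_transfer {s : Set ℝ} {f : ℝ → ℝ}
    (hf : StrictConcaveOn ℝ s f) {a b ε : ℝ} (ha : a ∈ s) (hb : b ∈ s) (hε : 0 < ε)
    (hεab : ε < b - a) : f a + f b < f (a + ε) + f (b - ε) := by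
  have hab : 0 < b - a := hε.trans hεab
  set θ := ε / (b - a)
  have hθ : 0 < θ := div_pos hε hab
  have hθ₁ : θ < 1 := (div_lt_one hab).2 hεab
  have hθε : θ * (b - a) = ε := div_mul_cancel₀ ε hab.ne'
  have hlow := hf.2 ha hb (by linarith) (sub_pos.2 hθ₁) hθ (sub_add_cancel 1 θ)
  have hhigh := hf.2 ha hb (by linarith) hθ (sub_pos.2 hθ₁) (add_sub_cancel θ 1)
  simp only [smul_eq_mul] at hlow hhigh
  rw [show (1 - θ) * a + θ * b = a + ε by rw [← hθε]; ring] at hlow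
  rw [show θ * a + (1 - θ) * b = b - ε by rw [← hθε]; ring] at hhigh
  linarith

noncomputable def linTerm (t : ℝ) : ℝ :=
  t * ((1 / 2) * logb 2 (4 * t ^ t / (t + 1) ^ (t + 1)))

theorem linEntropy_eq_sum_linTerm {X : Type*} [Fintype X] (p : X → ℝ) :
    linEntropy p = ∑ x, linTerm (p x) := rfl

noncomputable def linTermLog (t : ℝ) : ℝ :=
  t + (t * (t * log t) - t * ((t + 1) * log (t + 1))) / (2 * log 2)

noncomputable def linTermLogDeriv (t : ℝ) : ℝ :=
  1 + (2 * t * log t - (2 * t + 1) * log (t + 1)) / (2 * log 2)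

theorem linTerm_eq_linTermLog {t : ℝ} (ht : 0 ≤ t) : linTerm t = linTermLog t := by
  rcases ht.eq_or_lt with rfl | ht
  · simp [linTerm, linTermLog]
  have ht₁ : 0 < t + 1 := by linarith
  rw [linTerm, linTermLog, logb, log_div (by positivity) (rpow_pos_of_pos ht₁ _).ne',
    log_mul (by norm_num) (rpow_pos_of_pos ht t).ne', log_rpow ht, log_rpow ht₁,
    show (4 : ℝ) = 2 ^ 2 by norm_num, log_pow]
  field_simp
  ring

theorem continuous_linTermLog : Continuous linTermLog := by
  have hmul_log_succ : Continuous fun t : ℝ => (t + 1) * log (t + 1) :=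
    continuous_mul_log.comp (continuous_add_const 1)
  unfold linTermLog
  fun_prop

theorem hasDerivAt_linTermLog {t : ℝ} (ht : 0 < t) :
    HasDerivAt linTermLog (linTermLogDeriv t) t := by
  have hmul_log_succ : HasDerivAt (fun s => (s + 1) * log (s + 1)) (log (t + 1) + 1) t :=
    (hasDerivAt_mul_log (by linarith : t + 1 ≠ 0)).comp_add_const t 1
  refine ((hasDerivAt_id' t).add ((((hasDerivAt_id' t).mul (hasDerivAt_mul_log ht.ne')).sub
    ((hasDerivAt_id' t).mul hmul_log_succ)).div_const (2 * log 2))).congr_deriv ?_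
  rw [linTermLogDeriv]
  ring

theorem hasDerivAt_linTermLogDeriv {t : ℝ} (ht : 0 < t) :
    HasDerivAt linTermLogDeriv
      ((2 * log t + 2 - (2 * log (t + 1) + (2 * t + 1) / (t + 1))) / (2 * log 2)) t := by
  have hlog_succ : HasDerivAt (fun s => log (s + 1)) (t + 1)⁻¹ t :=
    (hasDerivAt_log (by linarith : t + 1 ≠ 0)).comp_add_const t 1
  have h2mul_log : HasDerivAt (fun s => 2 * s * log s) (2 * (log t + 1)) t := by
    simpa only [mul_assoc] using (hasDerivAt_mul_log ht.ne').const_mul 2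
  refine ((h2mul_log.sub ((((hasDerivAt_id' t).const_mul 2).add_const 1).mul hlog_succ)).div_const
    (2 * log 2)).const_add 1 |>.congr_deriv ?_
  ring

theorem deriv2_linTermLog_neg {t : ℝ} (ht : 0 < t) : deriv^[2] linTermLog t < 0 := by
  have ht₁ : 0 < t + 1 := by linarith
  have hderiv : deriv linTermLog =ᶠ[nhds t] linTermLogDeriv :=
    Filter.eventuallyEq_of_mem (Ioi_mem_nhds ht) fun s hs => (hasDerivAt_linTermLog hs).deriv
  rw [Function.iterate_succ_apply, Function.iterate_one, hderiv.deriv_eq,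
    (hasDerivAt_linTermLogDeriv ht).deriv]
  refine div_neg_of_neg_of_pos ?_ (by positivity)
  have hlog_ratio : log (t / (t + 1)) < t / (t + 1) - 1 :=
    log_lt_sub_one_of_pos (by positivity) ((div_lt_one ht₁).2 (by linarith)).ne
  rw [log_div ht.ne' ht₁.ne'] at hlog_ratio
  have hrecip : 0 < 1 / (t + 1) := by positivity
  rw [show t / (t + 1) - 1 = -(1 / (t + 1)) by field_simp; ring] at hlog_ratio
  rw [show (2 * t + 1) / (t + 1) = 2 - 1 / (t + 1) by field_simp; ring]
  linarith

theorem strictConcaveOn_linTerm : StrictConcaveOn ℝ (Ici 0) linTerm :=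
  (strictConcaveOn_of_deriv2_neg (convex_Ici 0) continuous_linTermLog.continuousOn
    fun t ht => deriv2_linTermLog_neg (by rwa [interior_Ici] at ht)).congr
    fun _ ht => (linTerm_eq_linTermLog ht).symm

section Transfer

variable {X : Type*} [Fintype X] [DecidableEq X]

def transfer (p : X → ℝ) (x y : X) (ε : ℝ) (z : X) : ℝ :=
  if z = x then p z + ε else if z = y then p z - ε else p z

theorem sum_comp_transfer (p : X → ℝ) {x y : X} (hxy : x ≠ y) (ε : ℝ) (φ : ℝ → ℝ) :
    ∑ z, φ (transfer p x y ε z) =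
      ∑ z, φ (p z) + ((φ (p x + ε) - φ (p x)) + (φ (p y - ε) - φ (p y))) := by
  rw [← sub_eq_iff_eq_add', ← Finset.sum_sub_distrib,
    Fintype.sum_eq_add x y hxy fun z hz => by simp [transfer, hz.1, hz.2]]
  simp [transfer, hxy.symm]

end Transfer

theorem linEntropy_lt_of_transfer_general
    {X : Type*} [Fintype X] [DecidableEq X] (p : X → ℝ)
    (hp : ∀ z, 0 ≤ p z) (hsum : ∑ z, p z = 1)
    (x y : X) (ε : ℝ) (hε : 0 < ε)
    (hlt : p x + ε < p y - ε)
    (q : X → ℝ)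
    (hq : q = fun z => if z = x then p z + ε else if z = y then p z - ε else p z) :
    (∀ z, 0 ≤ q z) ∧ ∑ z, q z = 1 ∧ linEntropy q > linEntropy p := by
  change q = transfer p x y ε at hq
  subst hq
  have hxy : x ≠ y := by rintro rfl; linarith
  refine ⟨fun z => ?_, ?_, ?_⟩
  · unfold transfer
    split_ifs with hzx hzy
    · linarith [hp z]
    · subst hzy; linarith [hp x]
    · exact hp z
  · simpa [hsum] using sum_comp_transfer p hxy ε id
  · rw [gt_iff_lt, linEntropy_eq_sum_linTerm, linEntropy_eq_sum_linTerm,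
      sum_comp_transfer p hxy ε linTerm, lt_add_iff_pos_right]
    have hgain := strictConcaveOn_linTerm.add_lt_add_of_transfer (hp x)
      (show p y ∈ Ici 0 from (hp x).trans (by linarith)) hε (by linarith)
    linarith

/-- Transferring mass `ε` from a more likely symbol `y` to a less likely symbol `x`
(with `p(x) + ε < p(y) − ε`) yields a probability distribution with strictly larger
Lin entropy. -/
theorem linEntropy_lt_of_transfer
    {X : Type*} [Fintype X] [DecidableEq X] [Nonempty X] (p : X → ℝ)
    (hp : ∀ z, 0 ≤ p z) (hsum : ∑ z, p z = 1)
    (x y : X) (hxy : p x < p y) (ε : ℝ) (hε : 0 < ε)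
    (hlt : p x + ε < p y - ε)
    (q : X → ℝ)
    (hq : q = fun z => if z = x then p z + ε else if z = y then p z - ε else p z) :
    (∀ z, 0 ≤ q z) ∧ ∑ z, q z = 1 ∧ linEntropy q > linEntropy p :=
  linEntropy_lt_of_transfer_general p hp hsum x y ε hε hlt q hq
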